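/- Let n ≥ 1 and let r = (r_0, r_1, r_2, …) be a sequence of nonnegative real numbers with Σ_j r_j = 1. Then for all σ, τ ∈ S_n, the family of products Π_{i=1}^n r_{d(i)}, indexed by those functions d : {1,…,n} → ℕ satisfying (for all i, j) τ(i) < τ(j) ⟺ σ(i) + n·d(i) < σ(j) + n·d(j), is summable, and its sum equals F_{Des(σ∘τ⁻¹)}(r). In probabilistic terms: if δ_1,…,δ_n are i.i.d. with P(δ_i = j) = r_j for j ∈ ℕ, then the probability that the standardization of (σ(1) + n·δ_1, …, σ(n) + n·δ_n) equals τ is F_{Des(σ∘τ⁻¹)}(r), which is the QS-distribution probability of σ∘τ⁻¹ inverse. -/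

import Mathlib

/-- The descent set of a permutation of `Fin (n+1)`, as a finset of `Fin n`. -/
def Des {n : ℕ} (σ : Equiv.Perm (Fin (n + 1))) : Finset (Fin n) :=
  Finset.univ.filter (fun i : Fin n => σ i.succ < σ i.castSucc)

/-- The fundamental quasisymmetric function `F_S` evaluated at
`r = (r_0, r_1, …)`: the sum of `r_{i_1}⋯r_{i_{n+1}}` over all weakly
increasing sequences `i : Fin (n+1) → ℕ` which increase strictly at each
position in `S`. -/
noncomputable def Fqs {n : ℕ} (r : ℕ → ℝ) (S : Finset (Fin n)) : ℝ :=
  ∑' p : {i : Fin (n + 1) → ℕ //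
      (∀ k : Fin n, i k.castSucc ≤ i k.succ) ∧ ∀ k ∈ S, i k.castSucc < i k.succ},
    ∏ j, r (p.1 j)

/-!
Since `0 ≤ σ i < n + 1`, the numbers `σ i + (n + 1) * d i` compare lexicographically by
`(d i, σ i)`. Hence `τ` is the standardization of this sequence exactly when `e = d ∘ τ⁻¹` is
weakly increasing and strictly increasing at every descent of `σ * τ⁻¹`, so `d ↦ d ∘ τ⁻¹` is a
weight-preserving bijection onto the index set of `F_{Des(σ * τ⁻¹)}`. Summability holds because a
real summable sequence is absolutely summable, and then so is its `(n + 1)`-fold product family.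
-/

theorem summable_fin_pi_prod_of_nonneg {ι : Type*} {m : ℕ} {f : Fin m → ι → ℝ}
    (hf : ∀ j, Summable (f j)) (hf0 : ∀ j x, 0 ≤ f j x) :
    Summable fun g : Fin m → ι => ∏ j, f j (g j) := by
  induction m with
  | zero => exact (hasSum_fintype _).summable
  | succ m ih =>
    have htail := ih (fun j => hf j.succ) (fun j => hf0 j.succ)
    have hpair := (hf 0).mul_of_nonneg htail (fun x => hf0 0 x) fun g =>
      Finset.prod_nonneg fun j _ => hf0 j.succ (g j)
    refine (Fin.consEquiv fun _ => ι).summable_iff.mp (hpair.congr fun x => ?_)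
    simp only [Function.comp_apply, Fin.consEquiv_apply, Fin.prod_univ_succ, Fin.cons_zero,
      Fin.cons_succ]

theorem summable_fin_pi_prod {ι : Type*} {m : ℕ} {f : Fin m → ι → ℝ}
    (hf : ∀ j, Summable (f j)) :
    Summable fun g : Fin m → ι => ∏ j, f j (g j) := by
  rw [← summable_abs_iff]
  simpa only [Finset.abs_prod] using
    summable_fin_pi_prod_of_nonneg (fun j => (hf j).abs) fun _ _ => abs_nonneg _

theorem Nat.add_mul_lt_add_mul_iff {N a b x y : ℕ} (ha : a < N) (hb : b < N) :
    a + N * x < b + N * y ↔ x < y ∨ x = y ∧ a < b := by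
  constructor
  · intro h
    rcases lt_trichotomy x y with hxy | rfl | hxy
    · exact .inl hxy
    · exact .inr ⟨rfl, by omega⟩
    · have : N * (y + 1) ≤ N * x := Nat.mul_le_mul_left N hxy
      nlinarith
  · rintro (hxy | ⟨rfl, hab⟩)
    · have : N * (x + 1) ≤ N * y := Nat.mul_le_mul_left N hxy
      nlinarith
    · omega

theorem strictMono_perm_add_mul_iff {n : ℕ} (π : Equiv.Perm (Fin (n + 1))) (e : Fin (n + 1) → ℕ) :
    StrictMono (fun k => (π k : ℕ) + (n + 1) * e k) ↔
      (∀ k : Fin n, e k.castSucc ≤ e k.succ) ∧ ∀ k ∈ Des π, e k.castSucc < e k.succ := by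
  have hstep (k : Fin n) :
      (π k.castSucc : ℕ) + (n + 1) * e k.castSucc < π k.succ + (n + 1) * e k.succ ↔
        e k.castSucc ≤ e k.succ ∧ (k ∈ Des π → e k.castSucc < e k.succ) := by
    have hne : (π k.castSucc : ℕ) ≠ π k.succ :=
      Fin.val_ne_of_ne (π.injective.ne (Fin.castSucc_lt_succ).ne)
    simp only [Des, Finset.mem_filter, Finset.mem_univ, true_and, Fin.lt_def]
    rw [Nat.add_mul_lt_add_mul_iff (π _).is_lt (π _).is_lt]
    omega
  simp only [Fin.strictMono_iff_lt_succ, hstep, forall_and]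

theorem forall_lt_iff_lt_iff_strictMono {α β γ : Type*} [LinearOrder β] [Preorder γ]
    (τ : α ≃ β) (f : α → γ) :
    (∀ i j, τ i < τ j ↔ f i < f j) ↔ StrictMono (f ∘ τ.symm) := by
  refine ⟨fun h a b hab => ?_, fun h i j => ?_⟩
  · exact (h (τ.symm a) (τ.symm b)).1 (by simpa using hab)
  · simpa using (h.lt_iff_lt (a := τ i) (b := τ j)).symm

def standardizationEquiv {n : ℕ} (σ τ : Equiv.Perm (Fin (n + 1))) :
    {d : Fin (n + 1) → ℕ //
        ∀ i j : Fin (n + 1), τ i < τ j ↔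
          (σ i : ℕ) + (n + 1) * d i < (σ j : ℕ) + (n + 1) * d j} ≃
    {e : Fin (n + 1) → ℕ //
        (∀ k : Fin n, e k.castSucc ≤ e k.succ) ∧
          ∀ k ∈ Des (σ * τ⁻¹), e k.castSucc < e k.succ} :=
  (Equiv.arrowCongr τ (Equiv.refl ℕ)).subtypeEquiv fun d => by
    rw [forall_lt_iff_lt_iff_strictMono τ, ← strictMono_perm_add_mul_iff]
    rfl

theorem qs_distribution_transition_general (n : ℕ) (r : ℕ → ℝ)
    (hr1 : HasSum r 1)
    (σ τ : Equiv.Perm (Fin (n + 1))) :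
    Summable (fun p : {i : Fin (n + 1) → ℕ //
        (∀ k : Fin n, i k.castSucc ≤ i k.succ) ∧
          ∀ k ∈ Des (σ * τ⁻¹), i k.castSucc < i k.succ} =>
      ∏ j, r (p.1 j)) ∧
    HasSum (fun d : {d : Fin (n + 1) → ℕ //
        ∀ i j : Fin (n + 1), τ i < τ j ↔
          (σ i : ℕ) + (n + 1) * d i < (σ j : ℕ) + (n + 1) * d j} =>
      ∏ i, r (d.1 i)) (Fqs r (Des (σ * τ⁻¹))) := by
  have hsum : Summable (fun p : {i : Fin (n + 1) → ℕ //
      (∀ k : Fin n, i k.castSucc ≤ i k.succ) ∧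
        ∀ k ∈ Des (σ * τ⁻¹), i k.castSucc < i k.succ} => ∏ j, r (p.1 j)) :=
    (summable_fin_pi_prod fun _ => hr1.summable).comp_injective Subtype.coe_injective
  refine ⟨hsum, ?_⟩
  convert (standardizationEquiv σ τ).hasSum_iff.mpr hsum.hasSum using 1
  · funext d
    exact (Equiv.prod_comp τ.symm fun i => r (d.1 i)).symm
  · rfl

/-- the family defining `F_{Des(σ∘τ⁻¹)}(r)` is summable, and the
family of products `Π_i r_{d(i)}`, over all `d` such that `τ` is the
standardization of `(σ(1) + N·d(1), …, σ(N) + N·d(N))` (`N = n+1`),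
is summable with sum `F_{Des(σ∘τ⁻¹)}(r)`. -/
theorem qs_distribution_transition (n : ℕ) (r : ℕ → ℝ)
    (hr0 : ∀ j, 0 ≤ r j) (hr1 : HasSum r 1)
    (σ τ : Equiv.Perm (Fin (n + 1))) :
    Summable (fun p : {i : Fin (n + 1) → ℕ //
        (∀ k : Fin n, i k.castSucc ≤ i k.succ) ∧
          ∀ k ∈ Des (σ * τ⁻¹), i k.castSucc < i k.succ} =>
      ∏ j, r (p.1 j)) ∧
    HasSum (fun d : {d : Fin (n + 1) → ℕ //
        ∀ i j : Fin (n + 1), τ i < τ j ↔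
          (σ i : ℕ) + (n + 1) * d i < (σ j : ℕ) + (n + 1) * d j} =>
      ∏ i, r (d.1 i)) (Fqs r (Des (σ * τ⁻¹))) :=
  qs_distribution_transition_general n r hr1 σ τ
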